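/- For coupled explicit Euler dynamical networks sharing local dynamics f (L_f-Lipschitz) and coupling g (L_g-Lipschitz in each argument, bounded by G), with weight matrices C and Ĉ and identical initial conditions, the stacked trajectory error e_n := max_i ‖x̂_i(t_n) − x_i(t_n)‖ satisfies e_{n+1} ≤ (1 + δt(L_f + 2 L_g ‖Ĉ‖_∞))·e_n + δt·G·‖Ĉ − C‖_∞, where ‖A‖_∞ := max_i Σ_j |a_{ij}|; hence e_n ≤ (G·‖Ĉ−C‖_∞ / (L_f + 2L_g‖Ĉ‖_∞)) · ((1 + δt(L_f + 2L_g‖Ĉ‖_∞))^n − 1). -/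

import Mathlib

/-!
Subtracting the two Euler steps at node `i`, the coupling difference splits as
`Ĉᵢⱼ (g x̂ᵢ x̂ⱼ - g xᵢ xⱼ) + (Ĉᵢⱼ - Cᵢⱼ) g xᵢ xⱼ`: the first part is Lipschitz in the current
error with constant `2 L_g ‖Ĉ‖_∞`, the second is bounded by `G ‖Ĉ - C‖_∞` independently of the
states. This gives an affine recursion `e_{n+1} ≤ (1 + δt K) e_n + δt B` with `e_0 = 0`, whose
solution is bounded by the geometric sum `(B / K) ((1 + δt K)^n - 1)`.
-/

open Finset

/-- The max-row-sum matrix norm `‖A‖_∞ = max_i Σ_j |a_{ij}|`. -/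
noncomputable def normInf {N : ℕ} [NeZero N] (A : Fin N → Fin N → ℝ) : ℝ :=
  Finset.univ.sup' Finset.univ_nonempty (fun i => ∑ j, |A i j|)

def eulerNetworkStep {ι E : Type*} [Fintype ι] [DecidableEq ι] [AddCommGroup E] [Module ℝ E]
    (δt : ℝ) (f : E → E) (g : E → E → E) (C : ι → ι → ℝ) (x : ι → E) (i : ι) : E :=
  x i + δt • (f (x i) + ∑ j ∈ univ.erase i, C i j • g (x i) (x j))

lemma normInf_nonneg {N : ℕ} [NeZero N] (A : Fin N → Fin N → ℝ) : 0 ≤ normInf A :=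
  (sum_nonneg fun j _ => abs_nonneg (A 0 j)).trans (le_sup' (fun i => ∑ j, |A i j|) (mem_univ 0))

lemma sum_erase_abs_le_normInf {N : ℕ} [NeZero N] (A : Fin N → Fin N → ℝ) (i : Fin N) :
    ∑ j ∈ univ.erase i, |A i j| ≤ normInf A :=
  (sum_le_sum_of_subset_of_nonneg (erase_subset i univ) fun _ _ _ => abs_nonneg _).trans
    (le_sup' (fun i => ∑ j, |A i j|) (mem_univ i))

lemma norm_smul_sub_smul_le {E : Type*} [SeminormedAddCommGroup E] [NormedSpace ℝ E]
    (a b : ℝ) (u v : E) : ‖a • u - b • v‖ ≤ |a| * ‖u - v‖ + |a - b| * ‖v‖ := by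
  have hsplit : a • u - b • v = a • (u - v) + (a - b) • v := by
    rw [smul_sub, sub_smul]; abel
  rw [hsplit, ← Real.norm_eq_abs, ← Real.norm_eq_abs, ← norm_smul, ← norm_smul]
  exact norm_add_le _ _

lemma norm_coupling_sub_le {N : ℕ} [NeZero N] {E : Type*} [SeminormedAddCommGroup E]
    [NormedSpace ℝ E] {g : E → E → E} {Lg G ε : ℝ} (hLg : 0 ≤ Lg)
    (hg : ∀ a b a' b', ‖g a b - g a' b'‖ ≤ Lg * (‖a - a'‖ + ‖b - b'‖))
    (hgB : ∀ a b, ‖g a b‖ ≤ G) (C Chat : Fin N → Fin N → ℝ) {y z : Fin N → E}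
    (hε : ∀ j, ‖y j - z j‖ ≤ ε) (i : Fin N) :
    ‖∑ j ∈ univ.erase i, Chat i j • g (y i) (y j) - ∑ j ∈ univ.erase i, C i j • g (z i) (z j)‖
      ≤ 2 * Lg * normInf Chat * ε + G * normInf (fun i j => Chat i j - C i j) := by
  have hε0 : 0 ≤ ε := (norm_nonneg _).trans (hε i)
  have hG : 0 ≤ G := (norm_nonneg _).trans (hgB (z i) (z i))
  have hterm : ∀ j, ‖Chat i j • g (y i) (y j) - C i j • g (z i) (z j)‖
      ≤ |Chat i j| * (2 * Lg * ε) + |Chat i j - C i j| * G := fun j => by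
    refine (norm_smul_sub_smul_le _ _ _ _).trans (add_le_add ?_ ?_)
    · gcongr
      exact (hg _ _ _ _).trans (by nlinarith [hε i, hε j])
    · exact mul_le_mul_of_nonneg_left (hgB _ _) (abs_nonneg _)
  calc _ = ‖∑ j ∈ univ.erase i, (Chat i j • g (y i) (y j) - C i j • g (z i) (z j))‖ := by
        rw [sum_sub_distrib]
    _ ≤ ∑ j ∈ univ.erase i, (|Chat i j| * (2 * Lg * ε) + |Chat i j - C i j| * G) :=
        norm_sum_le_of_le _ fun j _ => hterm j
    _ = (∑ j ∈ univ.erase i, |Chat i j|) * (2 * Lg * ε)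
          + (∑ j ∈ univ.erase i, |Chat i j - C i j|) * G := by
        rw [sum_add_distrib, sum_mul, sum_mul]
    _ ≤ normInf Chat * (2 * Lg * ε) + normInf (fun i j => Chat i j - C i j) * G := by
        gcongr
        · exact sum_erase_abs_le_normInf Chat i
        · exact sum_erase_abs_le_normInf (fun i j => Chat i j - C i j) i
    _ = _ := by ring

lemma norm_eulerNetworkStep_sub_le {N : ℕ} [NeZero N] {E : Type*} [SeminormedAddCommGroup E]
    [NormedSpace ℝ E] {δt Lf Lg G ε : ℝ} (hδt : 0 ≤ δt) (hLf : 0 ≤ Lf) (hLg : 0 ≤ Lg)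
    {f : E → E} {g : E → E → E} (hf : ∀ a b, ‖f a - f b‖ ≤ Lf * ‖a - b‖)
    (hg : ∀ a b a' b', ‖g a b - g a' b'‖ ≤ Lg * (‖a - a'‖ + ‖b - b'‖))
    (hgB : ∀ a b, ‖g a b‖ ≤ G) (C Chat : Fin N → Fin N → ℝ) {y z : Fin N → E}
    (hε : ∀ j, ‖y j - z j‖ ≤ ε) (i : Fin N) :
    ‖eulerNetworkStep δt f g Chat y i - eulerNetworkStep δt f g C z i‖
      ≤ (1 + δt * (Lf + 2 * Lg * normInf Chat)) * ε
        + δt * G * normInf (fun i j => Chat i j - C i j) := by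
  have hcoupling := norm_coupling_sub_le hLg hg hgB C Chat hε i
  have hlocal : ‖f (y i) - f (z i)‖ ≤ Lf * ε := (hf _ _).trans (by gcongr; exact hε i)
  have hsplit : eulerNetworkStep δt f g Chat y i - eulerNetworkStep δt f g C z i
      = (y i - z i) + δt • ((f (y i) - f (z i)) + (∑ j ∈ univ.erase i, Chat i j • g (y i) (y j)
          - ∑ j ∈ univ.erase i, C i j • g (z i) (z j))) := by
    simp only [eulerNetworkStep, smul_add, smul_sub]; abel
  rw [hsplit]
  calc _ ≤ ‖y i - z i‖ + δt * (‖f (y i) - f (z i)‖ + ‖∑ j ∈ univ.erase i,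
          Chat i j • g (y i) (y j) - ∑ j ∈ univ.erase i, C i j • g (z i) (z j)‖) := by
        refine (norm_add_le _ _).trans ?_
        rw [norm_smul, Real.norm_of_nonneg hδt]
        gcongr
        exact norm_add_le _ _
    _ ≤ ε + δt * (Lf * ε + (2 * Lg * normInf Chat * ε
          + G * normInf (fun i j => Chat i j - C i j))) := by
        gcongr; exact hε i
    _ = _ := by ring

lemma discrete_gronwall_const {u : ℕ → ℝ} {h K B : ℝ} (hu0 : u 0 ≤ 0)
    (hu : ∀ n, u (n + 1) ≤ (1 + h * K) * u n + h * B) (ha : 0 ≤ 1 + h * K) (hK : K ≠ 0)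
    (n : ℕ) : u n ≤ B / K * ((1 + h * K) ^ n - 1) := by
  induction n with
  | zero => simpa using hu0
  | succ n ih =>
    calc u (n + 1) ≤ (1 + h * K) * u n + h * B := hu n
      _ ≤ (1 + h * K) * (B / K * ((1 + h * K) ^ n - 1)) + h * B := by gcongr
      _ = B / K * ((1 + h * K) ^ (n + 1) - 1) := by field_simp; ring

theorem network_weight_error_propagation_general {N D : ℕ} [NeZero N]
    (δt Lf Lg G : ℝ) (hδt : 0 < δt) (hLf : 0 < Lf) (hLg : 0 ≤ Lg)
    (f : EuclideanSpace ℝ (Fin D) → EuclideanSpace ℝ (Fin D))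
    (g : EuclideanSpace ℝ (Fin D) → EuclideanSpace ℝ (Fin D) → EuclideanSpace ℝ (Fin D))
    (hf : ∀ a b, ‖f a - f b‖ ≤ Lf * ‖a - b‖)
    (hg : ∀ a b a' b', ‖g a b - g a' b'‖ ≤ Lg * (‖a - a'‖ + ‖b - b'‖))
    (hgB : ∀ a b, ‖g a b‖ ≤ G)
    (C Chat : Fin N → Fin N → ℝ)
    (x xh : ℕ → Fin N → EuclideanSpace ℝ (Fin D))
    (hx : ∀ n i, x (n + 1) i = x n i + δt • (f (x n i) +
      ∑ j ∈ Finset.univ.erase i, C i j • g (x n i) (x n j)))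
    (hxh : ∀ n i, xh (n + 1) i = xh n i + δt • (f (xh n i) +
      ∑ j ∈ Finset.univ.erase i, Chat i j • g (xh n i) (xh n j)))
    (h0 : ∀ i, x 0 i = xh 0 i) :
    (∀ n, (Finset.univ.sup' Finset.univ_nonempty fun i => ‖xh (n + 1) i - x (n + 1) i‖)
        ≤ (1 + δt * (Lf + 2 * Lg * normInf Chat))
            * (Finset.univ.sup' Finset.univ_nonempty fun i => ‖xh n i - x n i‖)
          + δt * G * normInf (fun i j => Chat i j - C i j))
    ∧ (∀ n, (Finset.univ.sup' Finset.univ_nonempty fun i => ‖xh n i - x n i‖)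
        ≤ (G * normInf (fun i j => Chat i j - C i j) / (Lf + 2 * Lg * normInf Chat))
            * ((1 + δt * (Lf + 2 * Lg * normInf Chat)) ^ n - 1)) := by
  have hChat := normInf_nonneg Chat
  have hstep : ∀ n, (univ.sup' univ_nonempty fun i => ‖xh (n + 1) i - x (n + 1) i‖)
      ≤ (1 + δt * (Lf + 2 * Lg * normInf Chat))
          * (univ.sup' univ_nonempty fun i => ‖xh n i - x n i‖)
        + δt * G * normInf (fun i j => Chat i j - C i j) := fun n =>
    sup'_le _ _ fun i _ => by
      rw [hx, hxh]
      exact norm_eulerNetworkStep_sub_le hδt.le hLf.le hLg hf hg hgB C Chat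
        (fun j => le_sup' (fun i => ‖xh n i - x n i‖) (mem_univ j)) i
  refine ⟨hstep, discrete_gronwall_const ?_ (fun n => (hstep n).trans_eq (by ring))
    (by positivity) (by positivity)⟩
  exact sup'_le _ _ fun i _ => by rw [h0, sub_self, norm_zero]

/-- Trajectory error between two Euler dynamical networks with the same local and
coupling dynamics but different weight matrices: one-step recursion bound and
resulting closed-form bound. -/
theorem network_weight_error_propagation {N D : ℕ} [NeZero N]
    (δt Lf Lg G : ℝ) (hδt : 0 < δt) (hLf : 0 < Lf) (hLg : 0 ≤ Lg) (hG : 0 ≤ G)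
    (f : EuclideanSpace ℝ (Fin D) → EuclideanSpace ℝ (Fin D))
    (g : EuclideanSpace ℝ (Fin D) → EuclideanSpace ℝ (Fin D) → EuclideanSpace ℝ (Fin D))
    (hf : ∀ a b, ‖f a - f b‖ ≤ Lf * ‖a - b‖)
    (hg : ∀ a b a' b', ‖g a b - g a' b'‖ ≤ Lg * (‖a - a'‖ + ‖b - b'‖))
    (hgB : ∀ a b, ‖g a b‖ ≤ G)
    (C Chat : Fin N → Fin N → ℝ)
    (x xh : ℕ → Fin N → EuclideanSpace ℝ (Fin D))
    (hx : ∀ n i, x (n + 1) i = x n i + δt • (f (x n i) +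
      ∑ j ∈ Finset.univ.erase i, C i j • g (x n i) (x n j)))
    (hxh : ∀ n i, xh (n + 1) i = xh n i + δt • (f (xh n i) +
      ∑ j ∈ Finset.univ.erase i, Chat i j • g (xh n i) (xh n j)))
    (h0 : ∀ i, x 0 i = xh 0 i) :
    (∀ n, (Finset.univ.sup' Finset.univ_nonempty fun i => ‖xh (n + 1) i - x (n + 1) i‖)
        ≤ (1 + δt * (Lf + 2 * Lg * normInf Chat))
            * (Finset.univ.sup' Finset.univ_nonempty fun i => ‖xh n i - x n i‖)
          + δt * G * normInf (fun i j => Chat i j - C i j))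
    ∧ (∀ n, (Finset.univ.sup' Finset.univ_nonempty fun i => ‖xh n i - x n i‖)
        ≤ (G * normInf (fun i j => Chat i j - C i j) / (Lf + 2 * Lg * normInf Chat))
            * ((1 + δt * (Lf + 2 * Lg * normInf Chat)) ^ n - 1)) :=
  network_weight_error_propagation_general δt Lf Lg G hδt hLf hLg f g hf hg hgB C Chat x xh hx hxh
    h0
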